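/- arXiv:0910.2584 — 5 statements merged into one kernel-verified Lean document; each statement's English description precedes it below -/
import Mathlib

section
/- Let x : ℝ → (Fin n → ℝ) be a solution of the quasi-polynomial system ẋ_i = x_i · Σ_{j=1}^{N} A_{ij} · Π_{k=1}^{n} x_k^{B_{jk}}, with x_i(t) > 0 for all i and t. Let C be an invertible real n×n matrix and define new variables x̃ by x_i = Π_k x̃_k^{C_{ik}} (equivalently x̃_i = Π_k x_k^{(C⁻¹)_{ik}}). Then x̃ satisfies the quasi-polynomial system ẋ̃_i = x̃_i · Σ_{j=1}^{N} Ã_{ij} · Π_k x̃_k^{B̃_{jk}} with Ã = C⁻¹ A and B̃ = B C. -/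
/-!
In logarithmic coordinates a quasi-monomial `∏ k, x k ^ v k` is the exponential of the linear
form `∑ k, v k * log (x k)`, and a QP system says `d/dt log x = A *ᵥ m` with monomials
`m j = ∏ k, x k ^ B j k`. Hence `d/dt log x̃ = C⁻¹ *ᵥ d/dt log x = (C⁻¹ * A) *ᵥ m`, and the
monomials are unchanged by the substitution `x = x̃ ^ C`, because their exponent rows transform
as `B j = (B * C) j ᵥ* C⁻¹`.
-/

open Matrix Finset

namespace Real

variable {ι κ : Type*} [Fintype ι] [Fintype κ]

theorem prod_rpow_prod_rpow {x : ι → ℝ} (hx : ∀ l, 0 < x l) (M : Matrix κ ι ℝ) (v : κ → ℝ) :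
    ∏ k, (∏ l, x l ^ M k l) ^ v k = ∏ l, x l ^ (v ᵥ* M) l := by
  have hcomp : ∀ k, (∏ l, x l ^ M k l) ^ v k = ∏ l, x l ^ (v k * M k l) := fun k => by
    rw [← finsetProd_rpow _ _ fun l _ => (rpow_pos_of_pos (hx l) _).le]
    exact prod_congr rfl fun l _ => by rw [← rpow_mul (hx l).le, mul_comm]
  simp_rw [hcomp]
  rw [prod_comm]
  exact prod_congr rfl fun l _ => (rpow_sum_of_pos (hx l) _ _).symm

theorem prod_rpow_eq_exp_sum {x : ι → ℝ} (hx : ∀ l, 0 < x l) (c : ι → ℝ) :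
    ∏ k, x k ^ c k = exp (∑ k, c k * log (x k)) := by
  rw [exp_sum]
  exact prod_congr rfl fun k _ => by rw [rpow_def_of_pos (hx k), mul_comm]

theorem hasDerivAt_prod_rpow {x : ℝ → ι → ℝ} {g : ι → ℝ} {t : ℝ} (hpos : ∀ s k, 0 < x s k)
    (hx : ∀ k, HasDerivAt (fun s => x s k) (x t k * g k) t) (c : ι → ℝ) :
    HasDerivAt (fun s => ∏ k, x s k ^ c k) ((∏ k, x t k ^ c k) * ∑ k, c k * g k) t := by
  have hlog : ∀ k, HasDerivAt (fun s => c k * log (x s k)) (c k * g k) t := fun k => by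
    have := ((hx k).log (hpos t k).ne').const_mul (c k)
    rwa [mul_div_cancel_left₀ _ (hpos t k).ne'] at this
  simp_rw [prod_rpow_eq_exp_sum (hpos _)]
  exact (HasDerivAt.fun_sum fun k _ => hlog k).exp

end Real

/-- Covariance of quasi-polynomial systems under quasi-monomial transformations:
if `x` is a positive solution of the QP system with data `(A, B)` and `C` is invertible,
then `x̃ i = ∏ k, x k ^ (C⁻¹ i k)` solves the QP system with data `(C⁻¹ * A, B * C)`. -/
theorem qp_covariance (n N : ℕ) (A : Matrix (Fin n) (Fin N) ℝ)
    (B : Matrix (Fin N) (Fin n) ℝ) (C : Matrix (Fin n) (Fin n) ℝ) (hC : IsUnit C)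
    (x : ℝ → Fin n → ℝ) (hpos : ∀ t i, 0 < x t i)
    (hx : ∀ t i, HasDerivAt (fun s => x s i)
      (x t i * ∑ j, A i j * ∏ k, x t k ^ B j k) t) :
    ∀ t i, HasDerivAt (fun s => ∏ k, x s k ^ (C⁻¹ i k))
      ((∏ k, x t k ^ (C⁻¹ i k)) *
        ∑ j, (C⁻¹ * A) i j * ∏ k, (∏ l, x t l ^ (C⁻¹ k l)) ^ (B * C) j k) t := by
  intro t i
  have hCC : C * C⁻¹ = 1 := mul_nonsing_inv C ((isUnit_iff_isUnit_det C).mp hC)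
  have hmonomial : ∀ j, ∏ k, (∏ l, x t l ^ C⁻¹ k l) ^ (B * C) j k = ∏ l, x t l ^ B j l := by
    intro j
    rw [Real.prod_rpow_prod_rpow (hpos t), ← mul_apply_eq_vecMul, Matrix.mul_assoc, hCC,
      Matrix.mul_one]
  convert Real.hasDerivAt_prod_rpow hpos (hx t) (C⁻¹ i) using 2
  simp_rw [hmonomial]
  exact congrFun (mulVec_mulVec _ C⁻¹ A).symm i
end

section
/- Let n = N and suppose B : Matrix (Fin n) (Fin n) ℝ is invertible. If x : ℝ → (Fin n → ℝ) is a positive solution of the QP system ẋ_i = x_i · Σ_j A_{ij} Π_k x_k^{B_{jk}}, then the transformed variables y_i = Π_k x_k^{B_{ik}} satisfy the Lotka-Volterra system ẏ_i = y_i · Σ_j (B·A)_{ij} · y_j. -/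
open Matrix Finset

/-! The monomial `y i = ∏ k, x k ^ B i k` is `exp (∑ k, B i k * log (x k))`, so its logarithmic
derivative is `∑ k, B i k * (ẋ k / x k)`. For a QP system `ẋ k / x k = (A *ᵥ y) k`, hence
`ẏ / y = B *ᵥ (A *ᵥ y) = (B * A) *ᵥ y`. -/

theorem Real.exp_sum_mul_log_eq_prod_rpow {ι : Type*} [Fintype ι] {x : ι → ℝ}
    (hx : ∀ k, 0 < x k) (b : ι → ℝ) :
    Real.exp (∑ k, b k * Real.log (x k)) = ∏ k, x k ^ b k := by
  rw [Real.exp_sum]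
  exact prod_congr rfl fun k _ => by rw [Real.rpow_def_of_pos (hx k), mul_comm]

theorem hasDerivAt_prod_rpow {ι : Type*} [Fintype ι] {x : ℝ → ι → ℝ} {x' : ι → ℝ} {t : ℝ}
    (hx : ∀ k, HasDerivAt (fun s => x s k) (x' k) t) (hpos : ∀ k, 0 < x t k) (b : ι → ℝ) :
    HasDerivAt (fun s => ∏ k, x s k ^ b k)
      ((∏ k, x t k ^ b k) * ∑ k, b k * (x' k / x t k)) t := by
  have hlog : HasDerivAt (fun s => ∑ k, b k * Real.log (x s k))
      (∑ k, b k * (x' k / x t k)) t :=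
    HasDerivAt.fun_sum fun k _ => ((hx k).log (hpos k).ne').const_mul (b k)
  have hpos_near : ∀ᶠ s in nhds t, ∀ k, 0 < x s k :=
    Filter.eventually_all.2 fun k => (hx k).continuousAt.eventually_const_lt (hpos k)
  rw [← Real.exp_sum_mul_log_eq_prod_rpow hpos]
  exact hlog.exp.congr_of_eventuallyEq <| hpos_near.mono fun s hs =>
    (Real.exp_sum_mul_log_eq_prod_rpow hs b).symm

theorem square_qp_to_lotka_volterra_general (n : ℕ) (A B : Matrix (Fin n) (Fin n) ℝ)
    (x : ℝ → Fin n → ℝ) (hpos : ∀ t i, 0 < x t i)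
    (hx : ∀ t i, HasDerivAt (fun s => x s i)
      (x t i * ∑ j, A i j * ∏ k, x t k ^ B j k) t) :
    ∀ t i, HasDerivAt (fun s => ∏ k, x s k ^ B i k)
      ((∏ k, x t k ^ B i k) * ∑ j, (B * A) i j * ∏ k, x t k ^ B j k) t := by
  intro t i
  set y : Fin n → ℝ := fun j => ∏ k, x t k ^ B j k
  have hmono := hasDerivAt_prod_rpow (hx t) (hpos t) (B i)
  simp only [mul_div_cancel_left₀ _ (hpos t _).ne'] at hmono
  convert hmono using 2
  exact (congrFun (mulVec_mulVec y B A) i).symm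

/-- Reduction of a square QP system with invertible exponent matrix `B` to the
Lotka-Volterra canonical form: the monomials `y i = ∏ k, x k ^ B i k` satisfy
`ẏ i = y i * ∑ j, (B * A) i j * y j`. -/
theorem square_qp_to_lotka_volterra (n : ℕ) (A B : Matrix (Fin n) (Fin n) ℝ)
    (hB : IsUnit B) (x : ℝ → Fin n → ℝ) (hpos : ∀ t i, 0 < x t i)
    (hx : ∀ t i, HasDerivAt (fun s => x s i)
      (x t i * ∑ j, A i j * ∏ k, x t k ^ B j k) t) :
    ∀ t i, HasDerivAt (fun s => ∏ k, x s k ^ B i k)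
      ((∏ k, x t k ^ B i k) * ∑ j, (B * A) i j * ∏ k, x t k ^ B j k) t :=
  square_qp_to_lotka_volterra_general n A B x hpos hx
end

section
/- Let x : ℝ → (Fin N → ℝ) be a smooth solution of the Lotka-Volterra system ẋ_i = x_i · Σ_j M_{ij} x_j. Then for every k ≥ 1, the k-th time derivative of x_i at t = 0 equals x_i(0) · Σ_{i₁,…,i_k ∈ Fin N} M_{i i₁} · (M_{i i₂} + M_{i₁ i₂}) · ⋯ · (M_{i i_k} + M_{i₁ i_k} + ⋯ + M_{i_{k-1} i_k}) · x_{i₁}(0) ⋯ x_{i_k}(0). -/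
open Matrix Finset

lemma filter_lt_castSucc {k : ℕ} (p : Fin k) :
    (Finset.univ.filter (fun q => q < Fin.castSucc p))
      = (Finset.univ.filter (fun q => q < p)).map Fin.castSuccEmb := by
  ext q
  simp only [Finset.mem_filter, Finset.mem_univ, true_and, Finset.mem_map,
    Fin.castSuccEmb, Function.Embedding.coeFn_mk, Fin.lt_def, Fin.coe_castSucc]
  constructor
  · intro h
    exact ⟨⟨q.val, by omega⟩, h, by simp [Fin.ext_iff, Fin.coe_castSucc]⟩
  · rintro ⟨a, ha, rfl⟩
    simpa using ha

lemma sum_filter_lt_castSucc {k : ℕ} (p : Fin k) (f : Fin (k + 1) → ℝ) :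
    ∑ q ∈ Finset.univ.filter (fun q => q < Fin.castSucc p), f q
      = ∑ q ∈ Finset.univ.filter (fun q => q < p), f (Fin.castSucc q) := by
  rw [filter_lt_castSucc, Finset.sum_map]; rfl

lemma filter_lt_last {k : ℕ} :
    (Finset.univ.filter (fun q => q < Fin.last k))
      = (Finset.univ : Finset (Fin k)).map Fin.castSuccEmb := by
  ext q
  simp only [Finset.mem_filter, Finset.mem_univ, true_and, Finset.mem_map,
    Fin.castSuccEmb, Function.Embedding.coeFn_mk, Fin.lt_def, Fin.val_last]
  constructor
  · intro h
    exact ⟨⟨q.val, by omega⟩, by simp [Fin.ext_iff]⟩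
  · rintro ⟨a, rfl⟩
    simpa using a.isLt

lemma sum_filter_lt_last {k : ℕ} (f : Fin (k + 1) → ℝ) :
    ∑ q ∈ Finset.univ.filter (fun q => q < Fin.last k), f q
      = ∑ q : Fin k, f (Fin.castSucc q) := by
  rw [filter_lt_last, Finset.sum_map]; rfl

noncomputable def LVc {N : ℕ} (M : Matrix (Fin N) (Fin N) ℝ) (k : ℕ) (i : Fin N)
    (ι : Fin k → Fin N) : ℝ :=
  ∏ p : Fin k, (M i (ι p) + ∑ q ∈ Finset.univ.filter (fun q => q < p), M (ι q) (ι p))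

lemma LVc_snoc {N : ℕ} (M : Matrix (Fin N) (Fin N) ℝ) (k : ℕ) (i : Fin N)
    (ι : Fin k → Fin N) (j : Fin N) :
    LVc M (k + 1) i (Fin.snoc ι j) = LVc M k i ι * (M i j + ∑ r : Fin k, M (ι r) j) := by
  unfold LVc
  rw [Fin.prod_univ_castSucc]
  congr 1
  · apply Finset.prod_congr rfl
    intro p _
    rw [Fin.snoc_castSucc, sum_filter_lt_castSucc]
    simp only [Fin.snoc_castSucc]
  · rw [Fin.snoc_last, sum_filter_lt_last]
    simp only [Fin.snoc_castSucc]

lemma sum_snoc {N k : ℕ} (g : (Fin (k + 1) → Fin N) → ℝ) :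
    ∑ ι : Fin (k + 1) → Fin N, g ι
      = ∑ j : Fin N, ∑ ι : Fin k → Fin N, g (Fin.snoc ι j) := by
  have := Fintype.sum_equiv (Fin.snocEquiv (fun _ => Fin N)).symm g
      (fun p => g (Fin.snoc p.2 p.1)) (fun ι => by
        simp [Fin.snocEquiv])
  rw [this, Fintype.sum_prod_type]

lemma LV_key {N : ℕ} (M : Matrix (Fin N) (Fin N) ℝ) (x : ℝ → Fin N → ℝ)
    (hx : ∀ t i, HasDerivAt (fun s => x s i) (x t i * ∑ j, M i j * x t j) t)
    (k : ℕ) (i : Fin N) (t : ℝ) :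
    HasDerivAt (fun s => x s i * ∑ ι : Fin k → Fin N, LVc M k i ι * ∏ p, x s (ι p))
      (x t i * ∑ ι : Fin (k + 1) → Fin N, LVc M (k + 1) i ι * ∏ p, x t (ι p)) t := by
  have hprod : ∀ ι : Fin k → Fin N, HasDerivAt (fun s => ∏ p, x s (ι p))
      (∑ r : Fin k, (∏ p ∈ Finset.univ.erase r, x t (ι p)) *
        (x t (ι r) * ∑ j, M (ι r) j * x t j)) t := by
    intro ι
    have := HasDerivAt.fun_finsetProd (u := Finset.univ) (f := fun p s => x s (ι p))
      (f' := fun p => x t (ι p) * ∑ j, M (ι p) j * x t j) (fun p _ => hx t (ι p))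
    simpa [smul_eq_mul] using this
  have h1 : HasDerivAt (fun s => x s i * ∑ ι : Fin k → Fin N, LVc M k i ι * ∏ p, x s (ι p))
      ((x t i * ∑ j, M i j * x t j) * (∑ ι : Fin k → Fin N, LVc M k i ι * ∏ p, x t (ι p))
        + x t i * ∑ ι : Fin k → Fin N, LVc M k i ι * ∑ r : Fin k,
            (∏ p ∈ Finset.univ.erase r, x t (ι p)) * (x t (ι r) * ∑ j, M (ι r) j * x t j)) t :=
    (hx t i).mul (HasDerivAt.fun_sum fun ι _ => (hprod ι).const_mul _)
  convert h1 using 1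
  rw [sum_snoc (fun ι => LVc M (k+1) i ι * ∏ p, x t (ι p))]
  simp only [LVc_snoc, Fin.prod_univ_castSucc, Fin.snoc_castSucc, Fin.snoc_last]
  have herase : ∀ (ι : Fin k → Fin N) (r : Fin k),
      (∏ p ∈ Finset.univ.erase r, x t (ι p)) * (x t (ι r) * ∑ j, M (ι r) j * x t j)
        = (∏ p, x t (ι p)) * ∑ j, M (ι r) j * x t j := fun ι r => by
    rw [← mul_assoc, Finset.prod_erase_mul _ _ (Finset.mem_univ r)]
  simp only [herase]
  rw [Finset.sum_comm, mul_assoc, ← mul_add]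
  congr 1
  rw [Finset.mul_sum, ← Finset.sum_add_distrib]
  apply Finset.sum_congr rfl
  intro ι _
  simp only [Finset.mul_sum, Finset.sum_mul, mul_add, add_mul, Finset.sum_add_distrib]
  congr 1
  · exact Finset.sum_congr rfl fun j _ => by ring
  · rw [Finset.sum_comm]
    exact Finset.sum_congr rfl fun r _ => Finset.sum_congr rfl fun j _ => by ring

lemma LV_main {N : ℕ} (M : Matrix (Fin N) (Fin N) ℝ) (x : ℝ → Fin N → ℝ)
    (hx : ∀ t i, HasDerivAt (fun s => x s i) (x t i * ∑ j, M i j * x t j) t)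
    (k : ℕ) (i : Fin N) (t : ℝ) :
    iteratedDeriv k (fun s => x s i) t
      = x t i * ∑ ι : Fin k → Fin N, LVc M k i ι * ∏ p, x t (ι p) := by
  induction k generalizing t with
  | zero => simp [LVc]
  | succ k ih =>
    rw [iteratedDeriv_succ, funext ih]
    exact (LV_key M x hx k i t).deriv

/-- Explicit formula for the Taylor coefficients of a smooth solution of the
Lotka-Volterra system `ẋ i = x i * ∑ j, M i j * x j`:
`x i ^(k)(0) = x i (0) * ∑_{i₁,…,i_k} M i i₁ (M i i₂ + M i₁ i₂) ⋯ x i₁(0) ⋯ x i_k(0)`. -/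
theorem lotka_volterra_taylor_coeff (N : ℕ) (M : Matrix (Fin N) (Fin N) ℝ)
    (x : ℝ → Fin N → ℝ) (hsm : ContDiff ℝ (⊤ : ℕ∞) x)
    (hx : ∀ t i, HasDerivAt (fun s => x s i) (x t i * ∑ j, M i j * x t j) t) :
    ∀ k : ℕ, 1 ≤ k → ∀ i,
      iteratedDeriv k (fun s => x s i) 0 =
        x 0 i * ∑ ι : Fin k → Fin N,
          (∏ p : Fin k, (M i (ι p) + ∑ q ∈ Finset.univ.filter (fun q => q < p), M (ι q) (ι p))) *
            ∏ p : Fin k, x 0 (ι p) := by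
  intro k _ i
  exact LV_main M x hx k i 0
end

section
/- Let x be a smooth solution of the Lotka-Volterra system ẋ_i = x_i Σ_j M_{ij} x_j with all x_i(0) > 0, and define c_i(k) = x_i^{(k)}(0). Suppose |M_{ij}| ≤ m and x_j(0) ≤ R for all i, j. Then |c_i(k)| ≤ R · k! · (N m R)^k for all k, and hence the Taylor series Σ_k c_i(k) t^k / k! has radius of convergence at least 1/(N m R). -/
open Matrix Finset

/-- Bound on the Taylor coefficients of a smooth positive solution of the
Lotka-Volterra system: if `|M i j| ≤ m` and `0 < x j 0 ≤ R`, then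
`|c i k| ≤ R * k! * (N m R)^k`, and hence the Taylor series
`∑ k, c i k * t^k / k!` converges for `|t| < 1 / (N m R)`. -/
theorem lotka_volterra_coeff_bound (N : ℕ) (M : Matrix (Fin N) (Fin N) ℝ)
    (x : ℝ → Fin N → ℝ) (hsm : ContDiff ℝ (⊤ : ℕ∞) x)
    (hx : ∀ t i, HasDerivAt (fun s => x s i) (x t i * ∑ j, M i j * x t j) t)
    (m R : ℝ) (hM : ∀ i j, |M i j| ≤ m) (hpos : ∀ j, 0 < x 0 j) (hR : ∀ j, x 0 j ≤ R)
    (c : Fin N → ℕ → ℝ) (hc : ∀ i k, c i k = iteratedDeriv k (fun s => x s i) 0) :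
    (∀ i k, |c i k| ≤ R * (k.factorial : ℝ) * ((N : ℝ) * m * R) ^ k) ∧
    (∀ i, ∀ t : ℝ, |t| < 1 / ((N : ℝ) * m * R) →
      Summable (fun k : ℕ => c i k * t ^ k / (k.factorial : ℝ))) := by
  set c0 : ℝ := (N : ℝ) * m * R with hc0
  -- coordinate smoothness
  have hcoord : ∀ j : Fin N, ContDiff ℝ (⊤ : ℕ∞) (fun s => x s j) := fun j => contDiff_pi.mp hsm j
  -- smoothness of the sum factor
  have hSdiff : ∀ i : Fin N, ContDiff ℝ (⊤ : ℕ∞) (fun t => ∑ j, M i j * x t j) := by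
    intro i
    apply ContDiff.sum
    intro j _
    exact (hcoord j).const_smul (M i j)
  -- bound on the iterated derivative of the sum factor
  have hSF : ∀ (i : Fin N) (q : ℕ),
      ‖iteratedFDeriv ℝ q (fun t => ∑ j, M i j * x t j) 0‖ ≤
        ∑ j, |M i j| * ‖iteratedFDeriv ℝ q (fun t => x t j) 0‖ := by
    intro i q
    have h1 : (fun t => ∑ j, M i j * x t j) = (fun t => ∑ j : Fin N, (fun s => M i j * x s j) t) := by
      rfl
    rw [h1, iteratedFDeriv_sum (f := fun j : Fin N => fun s => M i j * x s j)
      (fun j _ => contDiff_const.mul ((hcoord j).of_le (by exact_mod_cast le_top)))]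
    rw [Finset.sum_apply]
    refine (norm_sum_le _ _).trans (le_of_eq ?_)
    refine Finset.sum_congr rfl fun j _ => ?_
    have := iteratedFDeriv_const_smul_apply' (a := M i j) (f := fun s => x s j)
      (x := (0:ℝ)) (i := q) ((hcoord j).of_le (by exact_mod_cast le_top)).contDiffAt
    simp only [smul_eq_mul] at this
    rw [this, norm_smul (M i j) (iteratedFDeriv ℝ q (fun s => x s j) 0), Real.norm_eq_abs]
  -- main inductive bound
  have key : ∀ k : ℕ, ∀ i : Fin N,
      ‖iteratedFDeriv ℝ k (fun s => x s i) 0‖ ≤ R * (k.factorial : ℝ) * c0 ^ k := by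
    intro k
    induction k using Nat.strong_induction_on with
    | _ k IH =>
      intro i
      have hm0 : 0 ≤ m := le_trans (abs_nonneg _) (hM i i)
      have hRpos : 0 < R := lt_of_lt_of_le (hpos i) (hR i)
      have hc0nn : 0 ≤ c0 := by positivity
      match k with
      | 0 =>
        rw [norm_iteratedFDeriv_zero]
        simp only [Nat.factorial_zero, Nat.cast_one, pow_zero, mul_one]
        rw [Real.norm_eq_abs, abs_of_pos (hpos i)]
        exact hR i
      | (k+1) =>
        have hderiv : deriv (fun s => x s i) = fun t => x t i * ∑ j, M i j * x t j := by
          funext t; exact (hx t i).deriv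
        have h2 : ‖iteratedFDeriv ℝ (k+1) (fun s => x s i) 0‖ =
            ‖iteratedFDeriv ℝ k (fun t => x t i * ∑ j, M i j * x t j) 0‖ := by
          rw [norm_iteratedFDeriv_eq_norm_iteratedDeriv, iteratedDeriv_succ',
            hderiv, ← norm_iteratedFDeriv_eq_norm_iteratedDeriv]
        rw [h2]
        have hmul := norm_iteratedFDeriv_mul_le (𝕜 := ℝ) (N := ((⊤ : ℕ∞) : WithTop ℕ∞))
          ((hcoord i).of_le (by exact_mod_cast le_top)) ((hSdiff i).of_le (by exact_mod_cast le_top)) (0 : ℝ) (n := k) (by exact_mod_cast le_top)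
        refine hmul.trans ?_
        have hterm : ∀ p ∈ Finset.range (k+1),
            (k.choose p : ℝ) * ‖iteratedFDeriv ℝ p (fun s => x s i) 0‖ *
              ‖iteratedFDeriv ℝ (k-p) (fun t => ∑ j, M i j * x t j) 0‖ ≤
            R * (k.factorial : ℝ) * c0 ^ (k+1) := by
          intro p hp
          have hpk : p ≤ k := Nat.lt_succ_iff.mp (Finset.mem_range.mp hp)
          have h3 : ‖iteratedFDeriv ℝ p (fun s => x s i) 0‖ ≤ R * (p.factorial : ℝ) * c0 ^ p :=
            IH p (Nat.lt_succ_of_le hpk) i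
          have h4 : ‖iteratedFDeriv ℝ (k-p) (fun t => ∑ j, M i j * x t j) 0‖ ≤
              (N : ℝ) * (m * (R * ((k-p).factorial : ℝ) * c0 ^ (k-p))) := by
            refine (hSF i (k-p)).trans ?_
            have : ∀ j : Fin N, |M i j| * ‖iteratedFDeriv ℝ (k-p) (fun t => x t j) 0‖ ≤
                m * (R * ((k-p).factorial : ℝ) * c0 ^ (k-p)) := by
              intro j
              exact mul_le_mul (hM i j) (IH (k-p) (Nat.lt_succ_of_le (Nat.sub_le k p)) j)
                (norm_nonneg _) hm0
            calc ∑ j, |M i j| * ‖iteratedFDeriv ℝ (k-p) (fun t => x t j) 0‖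
                ≤ ∑ _j : Fin N, m * (R * ((k-p).factorial : ℝ) * c0 ^ (k-p)) :=
                  Finset.sum_le_sum fun j _ => this j
              _ = (N : ℝ) * (m * (R * ((k-p).factorial : ℝ) * c0 ^ (k-p))) := by
                  rw [Finset.sum_const, Finset.card_univ, Fintype.card_fin, nsmul_eq_mul]
          calc (k.choose p : ℝ) * ‖iteratedFDeriv ℝ p (fun s => x s i) 0‖ *
                ‖iteratedFDeriv ℝ (k-p) (fun t => ∑ j, M i j * x t j) 0‖
              ≤ (k.choose p : ℝ) * (R * (p.factorial : ℝ) * c0 ^ p) *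
                ((N : ℝ) * (m * (R * ((k-p).factorial : ℝ) * c0 ^ (k-p)))) := by
                apply mul_le_mul
                · exact mul_le_mul_of_nonneg_left h3 (by positivity)
                · exact h4
                · exact norm_nonneg _
                · positivity
            _ = R * ((k.choose p : ℝ) * (p.factorial : ℝ) * ((k-p).factorial : ℝ)) *
                  (c0 ^ p * c0 ^ (k-p)) * c0 := by ring
            _ = R * (k.factorial : ℝ) * c0 ^ (k+1) := by
                rw [← pow_add, Nat.add_sub_cancel' hpk]
                have : (k.choose p : ℝ) * (p.factorial : ℝ) * ((k-p).factorial : ℝ) =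
                    (k.factorial : ℝ) := by
                  rw [← Nat.cast_mul, ← Nat.cast_mul,
                    Nat.choose_mul_factorial_mul_factorial hpk]
                rw [this]; ring
        calc ∑ p ∈ Finset.range (k+1), (k.choose p : ℝ) *
              ‖iteratedFDeriv ℝ p (fun s => x s i) 0‖ *
              ‖iteratedFDeriv ℝ (k-p) (fun t => ∑ j, M i j * x t j) 0‖
            ≤ ∑ _p ∈ Finset.range (k+1), R * (k.factorial : ℝ) * c0 ^ (k+1) :=
              Finset.sum_le_sum hterm
          _ = R * ((k+1).factorial : ℝ) * c0 ^ (k+1) := by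
              rw [Finset.sum_const, Finset.card_range, nsmul_eq_mul, Nat.factorial_succ]
              push_cast; ring
  have hbound : ∀ i k, |c i k| ≤ R * (k.factorial : ℝ) * c0 ^ k := by
    intro i k
    rw [hc i k, ← Real.norm_eq_abs, ← norm_iteratedFDeriv_eq_norm_iteratedDeriv]
    exact key k i
  refine ⟨hbound, ?_⟩
  intro i t ht
  have hm0 : 0 ≤ m := le_trans (abs_nonneg _) (hM i i)
  have hRpos : 0 < R := lt_of_lt_of_le (hpos i) (hR i)
  have hc0nn : 0 ≤ c0 := by positivity
  rcases eq_or_lt_of_le hc0nn with h0 | h0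
  · rw [← h0, div_zero] at ht
    exact absurd ht (not_lt.mpr (abs_nonneg t))
  · have hr : c0 * |t| < 1 := by
      rw [lt_div_iff₀ h0] at ht
      linarith [ht]
    have hrnn : 0 ≤ c0 * |t| := mul_nonneg hc0nn (abs_nonneg t)
    refine Summable.of_norm_bounded
      ((summable_geometric_of_lt_one hrnn hr).mul_left R) ?_
    intro k
    have hfac : (0 : ℝ) < (k.factorial : ℝ) := by exact_mod_cast k.factorial_pos
    rw [Real.norm_eq_abs, abs_div, abs_mul, abs_pow, abs_of_pos hfac]
    rw [div_le_iff₀ hfac]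
    calc |c i k| * |t| ^ k ≤ (R * (k.factorial : ℝ) * c0 ^ k) * |t| ^ k := by
          exact mul_le_mul_of_nonneg_right (hbound i k) (by positivity)
      _ = R * (c0 * |t|) ^ k * (k.factorial : ℝ) := by rw [mul_pow]; ring
end

section
/- Let x be a smooth positive solution of the QP system ẋ_i = x_i Σ_j A_{ij} Π_l x_l^{B_{jl}}. Then the quasi-monomials u_j(t) := Π_l x_l(t)^{B_{jl}} satisfy the Lotka-Volterra system u̇_j = u_j · Σ_m (B·A)_{jm} · u_m. -/
open Matrix Finset

/-!
Writing the quasi-monomial `u_j = ∏ l, x_l ^ B_{jl}` as `exp (∑ l, B_{jl} log x_l)`, its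
logarithmic derivative is `∑ l, B_{jl} ẋ_l / x_l`. For a QP system `ẋ_l / x_l = (A u)_l`,
so `u̇_j / u_j = (B (A u))_j = ((B A) u)_j`.
-/

theorem Real.prod_rpow_eq_exp_sum_mul_log {ι : Type*} (s : Finset ι) {y b : ι → ℝ}
    (hy : ∀ i ∈ s, 0 < y i) :
    ∏ i ∈ s, y i ^ b i = Real.exp (∑ i ∈ s, b i * Real.log (y i)) := by
  rw [Real.exp_sum]
  exact prod_congr rfl fun i hi => by rw [Real.rpow_def_of_pos (hy i hi), mul_comm]

theorem HasDerivAt.finset_prod_rpow_const {ι : Type*} (s : Finset ι) {f : ι → ℝ → ℝ}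
    {f' b : ι → ℝ} {t : ℝ} (hf : ∀ i ∈ s, HasDerivAt (f i) (f' i) t)
    (hpos : ∀ i ∈ s, 0 < f i t) :
    HasDerivAt (fun u => ∏ i ∈ s, f i u ^ b i)
      ((∏ i ∈ s, f i t ^ b i) * ∑ i ∈ s, b i * (f' i / f i t)) t := by
  have hlog : HasDerivAt (fun u => ∑ i ∈ s, b i * Real.log (f i u))
      (∑ i ∈ s, b i * (f' i / f i t)) t :=
    HasDerivAt.fun_sum fun i hi => ((hf i hi).log (hpos i hi).ne').const_mul (b i)
  have hpos_near : ∀ᶠ u in nhds t, ∀ i ∈ s, 0 < f i u :=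
    (Filter.eventually_all_finset s).2 fun i hi =>
      continuousAt_const.eventually_lt (hf i hi).continuousAt (hpos i hi)
  rw [Real.prod_rpow_eq_exp_sum_mul_log s hpos]
  exact hlog.exp.congr_of_eventuallyEq <|
    hpos_near.mono fun u hu => Real.prod_rpow_eq_exp_sum_mul_log s hu

/-- For a smooth positive solution of a general (possibly non-square) QP system,
the quasi-monomials `u j t = ∏ l, x t l ^ B j l` satisfy the Lotka-Volterra system
`u̇ j = u j * ∑ m, (B * A) j m * u m`. -/
theorem qp_monomials_satisfy_lotka_volterra (n N : ℕ)
    (A : Matrix (Fin n) (Fin N) ℝ) (B : Matrix (Fin N) (Fin n) ℝ)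
    (x : ℝ → Fin n → ℝ) (hpos : ∀ t i, 0 < x t i)
    (hx : ∀ t i, HasDerivAt (fun s => x s i)
      (x t i * ∑ j, A i j * ∏ l, x t l ^ B j l) t) :
    ∀ t j, HasDerivAt (fun s => ∏ l, x s l ^ B j l)
      ((∏ l, x t l ^ B j l) * ∑ m, (B * A) j m * ∏ l, x t l ^ B m l) t := by
  intro t j
  set u : Fin N → ℝ := fun m => ∏ l, x t l ^ B m l
  convert HasDerivAt.finset_prod_rpow_const univ (b := B j)
    (fun l _ => hx t l) (fun l _ => hpos t l) using 2
  calc ∑ m, (B * A) j m * u m = ∑ l, B j l * (A *ᵥ u) l :=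
      congrFun (mulVec_mulVec u B A).symm j
    _ = ∑ l, B j l * ((x t l * (A *ᵥ u) l) / x t l) :=
      sum_congr rfl fun l _ => by rw [mul_div_cancel_left₀ _ (hpos t l).ne']
end
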